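/- If A and B are distinct subsets of [n] with |A| + |B| even, then the set C_n ∩ H_A^- ∩ H_B^- is contained in the hyperplane {x : ∑_{i∉A} x_i − ∑_{i∈A} x_i = 1 − |A|}; in particular it has Lebesgue measure zero in ℝ^n. -/

import Mathlib

open MeasureTheory Finset
open scoped symmDiff

/-! `∑ i ∈ Sᶜ, x i - ∑ i ∈ S, x i + #S` is the `ℓ¹`-distance from a point `x` of the cube to its
vertex `𝟙_S`, so `H_S^-` cuts out the `ℓ¹`-ball of radius `1` around that vertex. Two vertices
`𝟙_A ≠ 𝟙_B` with `|A| + |B|` even are at `ℓ¹`-distance `|A ∆ B| ≥ 2`, so by the triangle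
inequality a point in both balls lies on both spheres, i.e. on the hyperplane `H_A`, which is
Lebesgue-null. -/

namespace Finset

variable {α : Type*} [DecidableEq α]

theorem card_symmDiff_add_two_mul_card_inter (A B : Finset α) :
    #(A ∆ B) + 2 * #(A ∩ B) = #A + #B := by
  rw [symmDiff_def, sup_eq_union, card_union_of_disjoint disjoint_sdiff_sdiff]
  have hA := card_sdiff_add_card_inter A B
  have hB := card_sdiff_add_card_inter B A
  rw [inter_comm] at hB
  omega

theorem two_le_card_symmDiff {A B : Finset α} (hAB : A ≠ B) (hpar : Even (#A + #B)) :
    2 ≤ #(A ∆ B) := by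
  have hpos : 0 < #(A ∆ B) :=
    card_pos.mpr (nonempty_iff_ne_empty.mpr (symmDiff_eq_empty.not.mpr hAB))
  obtain ⟨r, hr⟩ := hpar
  have := card_symmDiff_add_two_mul_card_inter A B
  omega

end Finset

section CubeVertex

variable {ι : Type*} [Fintype ι] [DecidableEq ι]

def cubeVertex (S : Finset ι) : ι → ℝ := fun i => if i ∈ S then 1 else 0

theorem sum_abs_sub_cubeVertex {x : ι → ℝ} (hx : ∀ i, 0 ≤ x i ∧ x i ≤ 1) (S : Finset ι) :
    ∑ i, |x i - cubeVertex S i| = ∑ i ∈ Sᶜ, x i - ∑ i ∈ S, x i + #S := by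
  have hS : ∑ i ∈ S, |x i - cubeVertex S i| = ∑ i ∈ S, (1 - x i) :=
    sum_congr rfl fun i hi => by
      rw [cubeVertex, if_pos hi, abs_sub_comm, abs_of_nonneg (sub_nonneg.mpr (hx i).2)]
  have hSc : ∑ i ∈ Sᶜ, |x i - cubeVertex S i| = ∑ i ∈ Sᶜ, x i :=
    sum_congr rfl fun i hi => by
      rw [cubeVertex, if_neg (mem_compl.mp hi), sub_zero, abs_of_nonneg (hx i).1]
  rw [← sum_add_sum_compl S, hS, hSc, sum_sub_distrib, sum_const, nsmul_one]
  ring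

theorem sum_abs_cubeVertex_sub_cubeVertex (A B : Finset ι) :
    ∑ i, |cubeVertex A i - cubeVertex B i| = #(A ∆ B) := by
  calc ∑ i, |cubeVertex A i - cubeVertex B i| = ∑ i, if i ∈ A ∆ B then (1 : ℝ) else 0 :=
        sum_congr rfl fun i _ => by
          by_cases hA : i ∈ A <;> by_cases hB : i ∈ B <;> simp [cubeVertex, mem_symmDiff, hA, hB]
    _ = #(A ∆ B) := by rw [Fintype.sum_ite_mem, sum_const, nsmul_one]

theorem setOf_cube_inter_subset_setOf_sum_compl_sub_sum_eq {A B : Finset ι}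
    (hAB : 2 ≤ #(A ∆ B)) :
    {x : ι → ℝ | (∀ i, 0 ≤ x i ∧ x i ≤ 1) ∧
        ∑ i ∈ Aᶜ, x i - ∑ i ∈ A, x i ≤ 1 - (#A : ℝ) ∧
        ∑ i ∈ Bᶜ, x i - ∑ i ∈ B, x i ≤ 1 - (#B : ℝ)} ⊆
      {x : ι → ℝ | ∑ i ∈ Aᶜ, x i - ∑ i ∈ A, x i = 1 - (#A : ℝ)} := by
  rintro x ⟨hx, hxA, hxB⟩
  have htriangle : (#(A ∆ B) : ℝ) ≤
      ∑ i, |x i - cubeVertex A i| + ∑ i, |x i - cubeVertex B i| := by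
    rw [← sum_abs_cubeVertex_sub_cubeVertex, ← sum_add_distrib]
    exact sum_le_sum fun i _ => (abs_sub_le _ (x i) _).trans_eq (by rw [abs_sub_comm])
  rw [sum_abs_sub_cubeVertex hx, sum_abs_sub_cubeVertex hx] at htriangle
  have : (2 : ℝ) ≤ #(A ∆ B) := by exact_mod_cast hAB
  exact le_antisymm hxA (by linarith)

end CubeVertex

theorem MeasureTheory.Measure.addHaar_setOf_linearMap_eq {E : Type*} [NormedAddCommGroup E]
    [NormedSpace ℝ E] [MeasurableSpace E] [BorelSpace E] [FiniteDimensional ℝ E] (μ : Measure E)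
    [μ.IsAddHaarMeasure] {L : E →ₗ[ℝ] ℝ} (hL : L ≠ 0) (c : ℝ) : μ {x | L x = c} = 0 := by
  let S := (AffineSubspace.mk' c ⊥).comap L.toAffineMap
  have hS : (S : Set E) = {x | L x = c} := by
    ext x
    simp [S, AffineSubspace.mem_mk', sub_eq_zero]
  rw [← hS]
  refine Measure.addHaar_affineSubspace μ S fun htop => hL ?_
  have hLc : ∀ x, L x = c := fun x => by
    have hx : x ∈ S := htop ▸ AffineSubspace.mem_top ℝ E x
    rwa [← SetLike.mem_coe, hS] at hx
  ext x
  simp [hLc x, ← hLc 0]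

theorem volume_setOf_sum_compl_sub_sum_eq {ι : Type*} [Fintype ι] [DecidableEq ι] [Nonempty ι]
    (A : Finset ι) (c : ℝ) : volume {x : ι → ℝ | ∑ i ∈ Aᶜ, x i - ∑ i ∈ A, x i = c} = 0 := by
  let L : (ι → ℝ) →ₗ[ℝ] ℝ := ∑ i ∈ Aᶜ, LinearMap.proj i - ∑ i ∈ A, LinearMap.proj i
  have hL : ∀ x, L x = ∑ i ∈ Aᶜ, x i - ∑ i ∈ A, x i := fun x => by simp [L]
  obtain ⟨i₀⟩ := ‹Nonempty ι›
  have hLi₀ : L (Pi.single i₀ 1) ≠ 0 := by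
    by_cases h : i₀ ∈ A <;> simp [hL, sum_pi_single', h]
  simp_rw [← hL]
  exact Measure.addHaar_setOf_linearMap_eq volume (fun h => hLi₀ (by simp [h])) c

theorem stmt1 (n : ℕ) (A B : Finset (Fin n)) (hAB : A ≠ B)
    (hpar : Even (A.card + B.card)) :
    {x : Fin n → ℝ | (∀ i, 0 ≤ x i ∧ x i ≤ 1) ∧
        ∑ i ∈ Aᶜ, x i - ∑ i ∈ A, x i ≤ 1 - (A.card : ℝ) ∧
        ∑ i ∈ Bᶜ, x i - ∑ i ∈ B, x i ≤ 1 - (B.card : ℝ)} ⊆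
      {x : Fin n → ℝ | ∑ i ∈ Aᶜ, x i - ∑ i ∈ A, x i = 1 - (A.card : ℝ)} ∧
    volume {x : Fin n → ℝ | (∀ i, 0 ≤ x i ∧ x i ≤ 1) ∧
        ∑ i ∈ Aᶜ, x i - ∑ i ∈ A, x i ≤ 1 - (A.card : ℝ) ∧
        ∑ i ∈ Bᶜ, x i - ∑ i ∈ B, x i ≤ 1 - (B.card : ℝ)} = 0 := by
  have hsymm := two_le_card_symmDiff hAB hpar
  have hsub := setOf_cube_inter_subset_setOf_sum_compl_sub_sum_eq hsymm
  obtain ⟨i, -⟩ := card_pos.mp (zero_lt_two.trans_le hsymm)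
  have : Nonempty (Fin n) := ⟨i⟩
  exact ⟨hsub, measure_mono_null hsub (volume_setOf_sum_compl_sub_sum_eq A _)⟩
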